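/- arXiv:1009.3772 — 3 statements merged into one kernel-verified Lean document; each statement's English description precedes it below -/
import Mathlib

section
/- A finite connected simple graph G with at least one edge is maximally independent of type 2 if and only if G is an edge-disjoint union of two spanning trees. -/
open SimpleGraph

noncomputable section

/-- The freedom number `f(H) = 2|V(H)| - |E(H)|` of a subgraph. -/
def subFreedom {V : Type} {G : SimpleGraph V} (H : G.Subgraph) : ℤ :=
  2 * (H.verts.ncard : ℤ) - (H.edgeSet.ncard : ℤ)

/-- The freedom number `f(G) = 2|V| - |E|` of a graph. -/
def gFreedom {V : Type} (G : SimpleGraph V) : ℤ :=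
  2 * ((Set.univ : Set V).ncard : ℤ) - (G.edgeSet.ncard : ℤ)

/-- `G` is independent of type 2: every subgraph (with nonempty vertex set)
has freedom number at least 2. -/
def Indep2 {V : Type} (G : SimpleGraph V) : Prop :=
  ∀ H : G.Subgraph, H.verts.Nonempty → 2 ≤ subFreedom H

/-- `G` is maximally independent of type 2. -/
def MaxIndep2 {V : Type} (G : SimpleGraph V) : Prop := Indep2 G ∧ gFreedom G = 2

/-- `G` is independent of type 3: every subgraph with at least one edge
has freedom number at least 3. -/
def Indep3 {V : Type} (G : SimpleGraph V) : Prop :=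
  ∀ H : G.Subgraph, H.edgeSet.Nonempty → 3 ≤ subFreedom H

/-- `G` is maximally independent of type 3. -/
def MaxIndep3 {V : Type} (G : SimpleGraph V) : Prop := Indep3 G ∧ gFreedom G = 3

/-- A Laman graph: connected and maximally independent of type 3. -/
def Laman {V : Type} (G : SimpleGraph V) : Prop := G.Connected ∧ MaxIndep3 G

/-- Henneberg 1 move: `G'` (on vertex type `β`) is obtained from `G` (on `α`)
via the vertex embedding `φ` by adjoining the new vertex `w` joined to the images
of two distinct vertices `a`, `b` of `G`. -/
def Henneberg1Rel {α β : Type} (G : SimpleGraph α) (G' : SimpleGraph β)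
    (φ : α ↪ β) (w : β) : Prop :=
  (∀ y : β, y ∈ Set.range φ ∨ y = w) ∧ w ∉ Set.range φ ∧
  ∃ a b : α, a ≠ b ∧
    ∀ x y : β, G'.Adj x y ↔
      ((∃ c d : α, G.Adj c d ∧ x = φ c ∧ y = φ d) ∨
       (x = w ∧ (y = φ a ∨ y = φ b)) ∨ (y = w ∧ (x = φ a ∨ x = φ b)))

/-- Henneberg 2 move: `G'` is obtained from `G` by breaking the edge `(u,v)` of `G`
at the new vertex `w` and adding an edge from `w` to a third vertex `z`. -/
def Henneberg2Rel {α β : Type} (G : SimpleGraph α) (G' : SimpleGraph β)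
    (φ : α ↪ β) (w : β) : Prop :=
  (∀ y : β, y ∈ Set.range φ ∨ y = w) ∧ w ∉ Set.range φ ∧
  ∃ u v z : α, G.Adj u v ∧ z ≠ u ∧ z ≠ v ∧
    ∀ x y : β, G'.Adj x y ↔
      ((∃ a b : α, G.Adj a b ∧ ¬ (s(a, b) = s(u, v)) ∧ x = φ a ∧ y = φ b) ∨
       (x = w ∧ (y = φ u ∨ y = φ v ∨ y = φ z)) ∨
       (y = w ∧ (x = φ u ∨ x = φ v ∨ x = φ z)))

def finCastSuccEmb (n : ℕ) : Fin n ↪ Fin (n + 1) :=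
  ⟨Fin.castSucc, Fin.castSucc_injective n⟩

/-- `Derived G0 n G` : the graph `G` on `Fin n` is obtained from the base graph `G0`
by a finite sequence of Henneberg 1 and Henneberg 2 moves. -/
inductive Derived {m : ℕ} (G0 : SimpleGraph (Fin m)) : (n : ℕ) → SimpleGraph (Fin n) → Prop
  | base : Derived G0 m G0
  | h1 {n : ℕ} {G : SimpleGraph (Fin n)} {G' : SimpleGraph (Fin (n + 1))} :
      Derived G0 n G → Henneberg1Rel G G' (finCastSuccEmb n) (Fin.last n) →
      Derived G0 (n + 1) G'
  | h2 {n : ℕ} {G : SimpleGraph (Fin n)} {G' : SimpleGraph (Fin (n + 1))} :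
      Derived G0 n G → Henneberg2Rel G G' (finCastSuccEmb n) (Fin.last n) →
      Derived G0 (n + 1) G'

/-- `G` is an edge-disjoint union of two spanning trees. -/
def TwoSpanningTrees {V : Type} (G : SimpleGraph V) : Prop :=
  ∃ E₁ E₂ : Set (Sym2 V), E₁ ∪ E₂ = G.edgeSet ∧ Disjoint E₁ E₂ ∧
    (SimpleGraph.fromEdgeSet E₁).IsTree ∧ (SimpleGraph.fromEdgeSet E₂).IsTree

/-!
Two edge-disjoint spanning trees on `n` vertices have `2n - 2` edges, and a subgraph on `k`
vertices meets each of them in a forest, hence has at most `2k - 2` edges.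

Conversely, a multigraph in which every `k` vertices span at most `2k - 2` edges splits into two
forests, by induction on the number of edges. Its average degree is below `4`, so some vertex `v`
has degree `1`, `2` or `3`. Delete `v`; if its degree is `3`, also join two of its neighbours
that lie in no common tight set (one with exactly `2k - 2` edges). Such a pair exists because
tight sets sharing a vertex have a tight union, while no tight set contains all neighbours of `v`.
The two forests of the smaller multigraph extend by pendant edges at `v`, or by subdividing the
new edge with `v`. When the graph has `2n - 2` edges, both forests have `n - 1` edges, so they
are spanning trees.
-/

open Finset

namespace SimpleGraph

variable {V : Type*} {G : SimpleGraph V} {u v w : V}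

lemma not_reachable_of_forall_not_adj (hv : ∀ w, ¬G.Adj v w) (hvw : v ≠ w) :
    ¬G.Reachable v w := by
  rintro ⟨_ | ⟨h, _⟩⟩
  exacts [hvw rfl, hv _ h]

lemma Reachable.of_sup_edge_of_forall_not_adj (hv : ∀ w, ¬G.Adj v w)
    (h : (G ⊔ edge v u).Reachable v w) (hw : w ≠ v) : G.Reachable u w := by
  suffices ∀ t, Relation.ReflTransGen (G ⊔ edge v u).Adj v t → t = v ∨ G.Reachable u t from
    (this w ((reachable_iff_reflTransGen _ _).mp h)).resolve_left hw
  intro t ht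
  induction ht with
  | refl => exact .inl rfl
  | @tail t s _ hts ih =>
    rw [sup_adj, edge_adj] at hts
    rcases hts with hts | ⟨⟨-, rfl⟩ | ⟨-, rfl⟩, -⟩
    · rcases ih with rfl | ih
      exacts [absurd hts (hv s), .inr (ih.trans hts.reachable)]
    · exact .inr .rfl
    · exact .inl rfl

lemma IsAcyclic.sup_edge_of_forall_not_adj (hG : G.IsAcyclic) (hv : ∀ w, ¬G.Adj v w)
    (hu : v ≠ u) : (G ⊔ edge v u).IsAcyclic :=
  hG.sup_edge_of_not_reachable (not_reachable_of_forall_not_adj hv hu)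

lemma IsAcyclic.subdivide (hG : G.IsAcyclic) (hv : ∀ w, ¬G.Adj v w) (huw : G.Adj u w) :
    (G.deleteEdges {s(u, w)} ⊔ edge v u ⊔ edge v w).IsAcyclic := by
  have hbridge : ¬(G.deleteEdges {s(u, w)}).Reachable u w :=
    isBridge_iff.mp (isAcyclic_iff_forall_isBridge.mp hG huw)
  have hv' : ∀ t, ¬(G.deleteEdges {s(u, w)}).Adj v t := fun t h => hv t h.1
  have hvu : v ≠ u := fun h => hv w (h ▸ huw)
  have hvw : v ≠ w := fun h => hv u (h ▸ huw.symm)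
  exact ((hG.anti (deleteEdges_le _)).sup_edge_of_forall_not_adj hv' hvu).sup_edge_of_not_reachable
    fun h => hbridge (h.of_sup_edge_of_forall_not_adj hv' hvw.symm)

lemma IsAcyclic.exists_isTree_ge [Nonempty V] (hG : G.IsAcyclic) : ∃ T, G ≤ T ∧ T.IsTree := by
  obtain ⟨T, hGT, -, hT⟩ := connected_top.exists_isTree_le_of_le_of_isAcyclic le_top hG
  exact ⟨T, hGT, hT⟩

lemma IsAcyclic.card_edgeSet_add_one_le [Finite V] [Nonempty V] (hG : G.IsAcyclic) :
    Nat.card G.edgeSet + 1 ≤ Nat.card V := by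
  obtain ⟨T, hGT, hT⟩ := hG.exists_isTree_ge
  rw [← (isTree_iff_connected_and_card.mp hT).2]
  exact Nat.add_le_add_right (Set.ncard_le_ncard (edgeSet_mono hGT) (Set.toFinite _)) 1

lemma IsAcyclic.isTree_of_card [Finite V] (hG : G.IsAcyclic)
    (hcard : Nat.card G.edgeSet + 1 = Nat.card V) : G.IsTree := by
  have : Nonempty V := (Nat.card_pos_iff.mp (by omega)).1
  obtain ⟨T, hGT, hT⟩ := hG.exists_isTree_ge
  have hcardT := (isTree_iff_connected_and_card.mp hT).2
  rw [Nat.card_coe_set_eq] at hcard hcardT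
  rwa [edgeSet_inj.mp (Set.eq_of_subset_of_ncard_le (edgeSet_mono hGT) (by omega)
    (Set.toFinite _))]

lemma edgeSet_fromEdgeSet_of_subset {s : Set (Sym2 V)} (h : s ⊆ G.edgeSet) :
    (fromEdgeSet s).edgeSet = s := by
  rw [edgeSet_fromEdgeSet, sdiff_eq_left]
  exact Set.subset_compl_iff_disjoint_right.mp (h.trans G.edgeSet_subset_compl_diagSet)

lemma forall_not_adj_fromEdgeSet {s : Set (Sym2 V)} (hv : ∀ e ∈ s, v ∉ e) (w : V) :
    ¬(fromEdgeSet s).Adj v w :=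
  fun h => hv _ ((fromEdgeSet_adj _).mp h).1 (Sym2.mem_mk_left v w)

lemma Subgraph.ncard_edgeSet_add_two_le [Finite V] {F₁ F₂ : SimpleGraph V}
    (hG : G ≤ F₁ ⊔ F₂) (h₁ : F₁.IsAcyclic) (h₂ : F₂.IsAcyclic) (H : G.Subgraph)
    (hH : H.verts.Nonempty) :
    H.edgeSet.ncard + 2 ≤ 2 * H.verts.ncard := by
  have : Nonempty H.verts := hH.to_subtype
  let f : H.verts ↪ V := Function.Embedding.subtype _
  have hK : H.coe ≤ F₁.comap f ⊔ F₂.comap f := fun a b h => hG (H.adj_sub h)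
  have hK₁ := (h₁.of_comap f).card_edgeSet_add_one_le
  have hK₂ := (h₂.of_comap f).card_edgeSet_add_one_le
  rw [Nat.card_coe_set_eq, Nat.card_coe_set_eq] at hK₁ hK₂
  calc H.edgeSet.ncard + 2 = H.coe.edgeSet.ncard + 2 := by
        rw [← H.image_coe_edgeSet_coe,
          Set.ncard_image_of_injective _ (Sym2.map.injective Subtype.val_injective)]
    _ ≤ (F₁.comap f ⊔ F₂.comap f).edgeSet.ncard + 2 :=
        Nat.add_le_add_right (Set.ncard_le_ncard (SimpleGraph.edgeSet_mono hK) (Set.toFinite _)) 2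
    _ ≤ (F₁.comap f).edgeSet.ncard + (F₂.comap f).edgeSet.ncard + 2 := by
        rw [SimpleGraph.edgeSet_sup]
        exact Nat.add_le_add_right (Set.ncard_union_le _ _) 2
    _ ≤ 2 * H.verts.ncard := by omega

end SimpleGraph

section Multigraph

/- A multigraph on `V` is a multiset of edges `Sym2 V`: deleting a vertex of degree `3` and
joining two of its neighbours may create parallel edges (already in `K₄`). `IsSparse` is the
multigraph form of `Indep2`. -/

variable {V : Type*} [DecidableEq V]

def edgesWithin (E : Multiset (Sym2 V)) (W : Finset V) : ℕ := E.countP (· ∈ W.sym2)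

def IsSparse (E : Multiset (Sym2 V)) : Prop :=
  ∀ W : Finset V, W.Nonempty → edgesWithin E W + 2 ≤ 2 * #W

def IsTight (E : Multiset (Sym2 V)) (W : Finset V) : Prop := edgesWithin E W + 2 = 2 * #W

variable {E R : Multiset (Sym2 V)} {W D D₁ D₂ : Finset V} {v x y z : V}

lemma edgesWithin_add (E R : Multiset (Sym2 V)) (W : Finset V) :
    edgesWithin (E + R) W = edgesWithin E W + edgesWithin R W :=
  Multiset.countP_add _ _ _

lemma edgesWithin_cons (e : Sym2 V) (E : Multiset (Sym2 V)) (W : Finset V) :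
    edgesWithin (e ::ₘ E) W = edgesWithin E W + if e ∈ W.sym2 then 1 else 0 :=
  Multiset.countP_cons _ _ _

lemma edgesWithin_le_of_le (h : R ≤ E) : edgesWithin R W ≤ edgesWithin E W :=
  Multiset.countP_le_of_le _ h

lemma edgesWithin_mono (E : Multiset (Sym2 V)) (h : D₁ ⊆ D₂) :
    edgesWithin E D₁ ≤ edgesWithin E D₂ := by
  rw [edgesWithin, edgesWithin, Multiset.countP_eq_card_filter, Multiset.countP_eq_card_filter]
  exact Multiset.card_le_card
    (Multiset.monotone_filter_right _ fun _ => (Finset.sym2_mono h ·))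

lemma edgesWithin_add_edgesWithin_le (E : Multiset (Sym2 V)) (D₁ D₂ : Finset V) :
    edgesWithin E D₁ + edgesWithin E D₂ ≤
      edgesWithin E (D₁ ∪ D₂) + edgesWithin E (D₁ ∩ D₂) := by
  induction E using Multiset.induction_on with
  | empty => simp [edgesWithin]
  | cons e E ih =>
    simp only [edgesWithin_cons, Finset.mem_sym2_iff, Finset.mem_union, Finset.mem_inter]
    split_ifs <;> grind

lemma IsSparse.anti (hE : IsSparse E) (h : R ≤ E) : IsSparse R :=
  fun W hW => (Nat.add_le_add_right (edgesWithin_le_of_le h) 2).trans (hE W hW)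

lemma IsTight.union (hE : IsSparse E) (h₁ : IsTight E D₁) (h₂ : IsTight E D₂)
    (h : (D₁ ∩ D₂).Nonempty) : IsTight E (D₁ ∪ D₂) := by
  have := edgesWithin_add_edgesWithin_le E D₁ D₂
  have := hE _ (h.mono Finset.inter_subset_union)
  have := hE _ h
  have := Finset.card_union_add_card_inter D₁ D₂
  unfold IsTight at *
  omega

lemma IsSparse.cons (hE : IsSparse E) (hxy : ∀ D, x ∈ D → y ∈ D → ¬IsTight E D) :
    IsSparse (s(x, y) ::ₘ E) := by
  intro W hW
  have := hE W hW
  rw [edgesWithin_cons]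
  split_ifs with h
  · have := hxy W (Finset.mem_sym2_iff.mp h x (Sym2.mem_mk_left x y))
      (Finset.mem_sym2_iff.mp h y (Sym2.mem_mk_right x y))
    unfold IsTight at this
    omega
  · omega

lemma sum_countP_mem [Fintype V] (hE : ∀ e ∈ E, ¬e.IsDiag) :
    ∑ v, E.countP (v ∈ ·) = 2 * Multiset.card E := by
  induction E using Multiset.induction_on with
  | empty => simp
  | cons e E ih =>
    have he : ¬e.IsDiag := hE e (Multiset.mem_cons_self e E)
    simp only [Multiset.countP_cons, Finset.sum_add_distrib, Finset.sum_boole,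
      ih fun e' he' => hE e' (Multiset.mem_cons_of_mem he'), Multiset.card_cons]
    have : ({v | v ∈ e} : Finset V) = e.toFinset := by ext; simp
    rw [this, Sym2.card_toFinset_of_not_isDiag e he]
    push_cast
    ring

lemma exists_countP_mem_pos_le_three [Fintype V] (hE0 : E ≠ 0) (hloop : ∀ e ∈ E, ¬e.IsDiag)
    (hE : IsSparse E) : ∃ v, 0 < E.countP (v ∈ ·) ∧ E.countP (v ∈ ·) ≤ 3 := by
  set S : Finset V := {v | 0 < E.countP (v ∈ ·)}
  have hsum : ∑ v ∈ S, E.countP (v ∈ ·) = 2 * Multiset.card E := by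
    rw [← sum_countP_mem hloop]
    exact Finset.sum_subset (Finset.subset_univ S) fun v _ hv => by simpa [S] using hv
  have hwithin : edgesWithin E S = Multiset.card E := by
    refine Multiset.countP_eq_card.mpr fun e he => Finset.mem_sym2_iff.mpr fun v hv => ?_
    simpa [S] using Multiset.countP_pos.mpr ⟨e, he, hv⟩
  obtain ⟨e, he⟩ := Multiset.exists_mem_of_ne_zero hE0
  have hS : S.Nonempty := by
    induction e using Sym2.ind with
    | _ v w =>
      exact ⟨v, by simpa [S] using Multiset.countP_pos.mpr ⟨_, he, Sym2.mem_mk_left v w⟩⟩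
  have := hE S hS
  obtain ⟨v, hvS, hv⟩ : ∃ v ∈ S, E.countP (v ∈ ·) < 4 :=
    Finset.exists_lt_of_sum_lt (by simp only [Finset.sum_const, smul_eq_mul]; omega)
  exact ⟨v, by simpa [S] using hvS, by omega⟩

lemma exists_filter_mem_eq_map (hloop : ∀ e ∈ E, ¬e.IsDiag) (v : V) :
    ∃ N : Multiset V, v ∉ N ∧ E.filter (v ∈ ·) = N.map (s(v, ·)) := by
  induction E using Multiset.induction_on with
  | empty => exact ⟨0, by simp, by simp⟩
  | cons e E ih =>
    obtain ⟨N, hvN, hN⟩ := ih fun e' he' => hloop e' (Multiset.mem_cons_of_mem he')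
    by_cases hve : v ∈ e
    · obtain ⟨w, rfl⟩ := Sym2.mem_iff_exists.mp hve
      have hvw : v ≠ w := fun h =>
        hloop _ (Multiset.mem_cons_self _ _) (h ▸ Sym2.mk_isDiag_iff.mpr rfl)
      refine ⟨w ::ₘ N, ?_, ?_⟩
      · simp [hvN, hvw]
      · rw [Multiset.filter_cons_of_pos E hve, hN, Multiset.map_cons]
    · exact ⟨N, hvN, by rw [Multiset.filter_cons_of_neg E hve, hN]⟩

lemma card_add_edgesWithin_le {N : Multiset V} (hE : IsSparse (N.map (s(v, ·)) + R))
    (hD : ∀ w ∈ N, w ∈ D) : Multiset.card N + edgesWithin R D ≤ 2 * #D := by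
  have hstar : edgesWithin (N.map (s(v, ·))) (insert v D) = Multiset.card N := by
    rw [edgesWithin, Multiset.countP_eq_card.mpr, Multiset.card_map]
    simp only [Multiset.mem_map, Finset.mem_sym2_iff]
    rintro _ ⟨w, hw, rfl⟩ t ht
    rcases Sym2.mem_iff.mp ht with rfl | rfl
    exacts [Finset.mem_insert_self _ _, Finset.mem_insert_of_mem (hD _ hw)]
  have := hE (insert v D) (Finset.insert_nonempty v D)
  have := edgesWithin_mono R (Finset.subset_insert v D)
  have := Finset.card_insert_le v D
  rw [edgesWithin_add, hstar] at *
  omega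

lemma IsSparse.exists_pair_not_isTight (hR : IsSparse R) (hxyz : ¬(x = y ∧ y = z))
    (h : ∀ D, x ∈ D → y ∈ D → z ∈ D → ¬IsTight R D) :
    ∃ a b c, ({a, b, c} : Multiset V) = {x, y, z} ∧ a ≠ b ∧
      ∀ D, a ∈ D → b ∈ D → ¬IsTight R D := by
  by_cases hxy : x = y
  · subst hxy
    refine ⟨x, z, x, by rw [Multiset.pair_comm z x], fun hxz => hxyz ⟨rfl, hxz⟩,
      fun D hx hz => h D hx hx hz⟩
  by_cases hD : ∃ D, x ∈ D ∧ y ∈ D ∧ IsTight R D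
  · obtain ⟨D₁, hx₁, hy₁, ht₁⟩ := hD
    refine ⟨y, z, x, ?_, ?_, fun D₂ hy₂ hz₂ ht₂ => ?_⟩
    · simp only [Multiset.insert_eq_cons, Multiset.cons_swap y, Multiset.pair_comm z x]
    · rintro rfl
      exact h D₁ hx₁ hy₁ hy₁ ht₁
    · exact h _ (Finset.mem_union_left _ hx₁) (Finset.mem_union_left _ hy₁)
        (Finset.mem_union_right _ hz₂)
        (ht₁.union hR ht₂ ⟨y, Finset.mem_inter.mpr ⟨hy₁, hy₂⟩⟩)
  · push Not at hD
    exact ⟨x, y, z, rfl, hxy, fun D hx hy ht => hD D hx hy |>.elim ht⟩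

lemma IsSparse.exists_ne_isSparse_cons
    (hE : IsSparse (({x, y, z} : Multiset V).map (s(v, ·)) + R)) :
    ∃ a b c, ({a, b, c} : Multiset V) = {x, y, z} ∧ a ≠ b ∧ IsSparse (s(a, b) ::ₘ R) := by
  have hxyz : ¬(x = y ∧ y = z) := by
    rintro ⟨rfl, rfl⟩
    have := card_add_edgesWithin_le (D := {x}) hE (by simp)
    simp only [Multiset.insert_eq_cons, Multiset.card_cons, Multiset.card_singleton,
      Finset.card_singleton] at this
    omega
  have hR := hE.anti le_add_self
  obtain ⟨a, b, c, habc, hab, hnt⟩ := hR.exists_pair_not_isTight hxyz fun D hx hy hz ht => by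
    have := card_add_edgesWithin_le (D := D) hE (by simp [hx, hy, hz])
    rw [IsTight] at ht
    simp only [Multiset.insert_eq_cons, Multiset.card_cons, Multiset.card_singleton] at this
    omega
  exact ⟨a, b, c, habc, hab, hR.cons hnt⟩

end Multigraph

section Forests

variable {V : Type*} [DecidableEq V] {F : Finset (Sym2 V)} {R : Multiset (Sym2 V)} {a b c v : V}

lemma isAcyclic_fromEdgeSet_insert (hF : (fromEdgeSet (F : Set (Sym2 V))).IsAcyclic)
    (hv : ∀ e ∈ F, v ∉ e) (ha : v ≠ a) :
    (fromEdgeSet ((insert s(v, a) F : Finset (Sym2 V)) : Set (Sym2 V))).IsAcyclic := by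
  rw [Finset.coe_insert, Set.insert_eq, fromEdgeSet_union, sup_comm]
  exact hF.sup_edge_of_forall_not_adj (forall_not_adj_fromEdgeSet hv) ha

lemma isAcyclic_fromEdgeSet_subdivide (hF : (fromEdgeSet (F : Set (Sym2 V))).IsAcyclic)
    (hv : ∀ e ∈ F, v ∉ e) (hab : s(a, b) ∈ F) (hne : a ≠ b) :
    (fromEdgeSet ((insert s(v, a) (insert s(v, b) (F.erase s(a, b))) : Finset (Sym2 V)) :
      Set (Sym2 V))).IsAcyclic := by
  have := hF.subdivide (forall_not_adj_fromEdgeSet hv) ((fromEdgeSet_adj _).mpr ⟨hab, hne⟩)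
  rw [Finset.coe_insert, Finset.coe_insert, Finset.coe_erase, Set.insert_eq, Set.insert_eq,
    fromEdgeSet_union, fromEdgeSet_union, fromEdgeSet_sdiff]
  convert this using 1
  simp only [deleteEdges, edge]
  ac_rfl

def HasTwoForests (E : Multiset (Sym2 V)) : Prop :=
  ∃ F₁ F₂ : Finset (Sym2 V), (fromEdgeSet (F₁ : Set (Sym2 V))).IsAcyclic ∧
    (fromEdgeSet (F₂ : Set (Sym2 V))).IsAcyclic ∧ F₁.val + F₂.val = E

lemma val_insert_of_forall_not_mem (hv : ∀ e ∈ F, v ∉ e) (w : V) :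
    (insert s(v, w) F).val = s(v, w) ::ₘ F.val :=
  Finset.insert_val_of_notMem fun h => hv _ h (Sym2.mem_mk_left v w)

lemma HasTwoForests.map_mk_add (h : HasTwoForests R) (hv : ∀ e ∈ R, v ∉ e) {N : Multiset V}
    (hvN : v ∉ N) (hN : Multiset.card N ≤ 2) : HasTwoForests (N.map (s(v, ·)) + R) := by
  obtain ⟨F₁, F₂, h₁, h₂, rfl⟩ := h
  have hv₁ : ∀ e ∈ F₁, v ∉ e := fun e he => hv e (Multiset.mem_add.mpr (.inl he))
  have hv₂ : ∀ e ∈ F₂, v ∉ e := fun e he => hv e (Multiset.mem_add.mpr (.inr he))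
  rcases (by omega : Multiset.card N = 0 ∨ Multiset.card N = 1 ∨ Multiset.card N = 2)
    with hN | hN | hN
  · exact ⟨F₁, F₂, h₁, h₂, by simp [Multiset.card_eq_zero.mp hN]⟩
  · obtain ⟨a, rfl⟩ := Multiset.card_eq_one.mp hN
    refine ⟨_, F₂, isAcyclic_fromEdgeSet_insert h₁ hv₁ (by simpa using hvN), h₂, ?_⟩
    simp [val_insert_of_forall_not_mem hv₁]
  · obtain ⟨a, b, rfl⟩ := Multiset.card_eq_two.mp hN
    simp only [Multiset.insert_eq_cons, Multiset.mem_cons, Multiset.mem_singleton, not_or] at hvN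
    refine ⟨_, _, isAcyclic_fromEdgeSet_insert h₁ hv₁ hvN.1,
      isAcyclic_fromEdgeSet_insert h₂ hv₂ hvN.2, ?_⟩
    simp [val_insert_of_forall_not_mem hv₁, val_insert_of_forall_not_mem hv₂,
      Multiset.cons_swap]

lemma HasTwoForests.subdivide (h : HasTwoForests (s(a, b) ::ₘ R)) (hab : a ≠ b)
    (hv : ∀ e ∈ R, v ∉ e) (ha : v ≠ a) (hb : v ≠ b) (hc : v ≠ c) :
    HasTwoForests (({a, b, c} : Multiset V).map (s(v, ·)) + R) := by
  obtain ⟨F₁, F₂, h₁, h₂, hF⟩ := h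
  wlog habF : s(a, b) ∈ F₁ generalizing F₁ F₂
  · have habF₂ : s(a, b) ∈ F₂ := by
      have : s(a, b) ∈ F₁.val + F₂.val := hF ▸ Multiset.mem_cons_self _ _
      exact (Multiset.mem_add.mp this).resolve_left habF
    exact this F₂ F₁ h₂ h₁ (by rwa [add_comm]) habF₂
  have hvF : ∀ e ∈ F₁.val + F₂.val, v ∉ e := by
    rw [hF]
    rintro e he
    rcases Multiset.mem_cons.mp he with rfl | he
    · simp [ha, hb]
    · exact hv e he
  have hv₁ : ∀ e ∈ F₁, v ∉ e := fun e he => hvF e (Multiset.mem_add.mpr (.inl he))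
  have hv₂ : ∀ e ∈ F₂, v ∉ e := fun e he => hvF e (Multiset.mem_add.mpr (.inr he))
  refine ⟨_, _, isAcyclic_fromEdgeSet_subdivide h₁ hv₁ habF hab,
    isAcyclic_fromEdgeSet_insert h₂ hv₂ hc, ?_⟩
  have hR : R = F₁.val.erase s(a, b) + F₂.val := by
    rw [← Multiset.erase_add_left_pos _ habF, hF, Multiset.erase_cons_head]
  have hva : s(v, a) ∉ insert s(v, b) (F₁.erase s(a, b)) := by
    rw [Finset.mem_insert, not_or]
    exact ⟨fun h => hab (Sym2.congr_right.mp h),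
      fun h => hv₁ _ (Finset.mem_of_mem_erase h) (Sym2.mem_mk_left v a)⟩
  rw [hR, val_insert_of_forall_not_mem hv₂, Finset.insert_val_of_notMem hva,
    val_insert_of_forall_not_mem (fun e he => hv₁ e (Finset.mem_of_mem_erase he)),
    Finset.erase_val]
  simp [Multiset.cons_swap]

theorem IsSparse.hasTwoForests [Fintype V] {E : Multiset (Sym2 V)}
    (hloop : ∀ e ∈ E, ¬e.IsDiag) (hE : IsSparse E) : HasTwoForests E := by
  induction hn : Multiset.card E using Nat.strong_induction_on generalizing E with
  | _ n ih =>
  rcases eq_or_ne E 0 with rfl | hE0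
  · exact ⟨∅, ∅, by simp, by simp, rfl⟩
  obtain ⟨v, hpos, hle⟩ := exists_countP_mem_pos_le_three hE0 hloop hE
  obtain ⟨N, hvN, hN⟩ := exists_filter_mem_eq_map hloop v
  set R := E.filter (v ∉ ·)
  have hsplit : N.map (s(v, ·)) + R = E := hN ▸ Multiset.filter_add_not _ E
  have hRE : R ≤ E := Multiset.filter_le _ E
  have hRloop : ∀ e ∈ R, ¬e.IsDiag := fun e he => hloop e (Multiset.mem_of_le hRE he)
  have hvR : ∀ e ∈ R, v ∉ e := fun e he => (Multiset.mem_filter.mp he).2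
  have hcard : Multiset.card R + Multiset.card N = n := by
    rw [← hn, ← hsplit, Multiset.card_add, Multiset.card_map, add_comm]
  have hdeg : Multiset.card N = E.countP (v ∈ ·) := by
    rw [Multiset.countP_eq_card_filter, hN, Multiset.card_map]
  rw [← hsplit] at hE ⊢
  rcases (by omega : Multiset.card N ≤ 2 ∨ Multiset.card N = 3) with hN2 | hN3
  · exact (ih _ (by omega) hRloop (hE.anti le_add_self) rfl).map_mk_add hvR hvN hN2
  obtain ⟨x, y, z, rfl⟩ := Multiset.card_eq_three.mp hN3
  obtain ⟨a, b, c, habc, hab, hsp⟩ := hE.exists_ne_isSparse_cons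
  rw [← habc] at hvN ⊢
  simp only [Multiset.insert_eq_cons, Multiset.mem_cons, Multiset.mem_singleton, not_or] at hvN
  have hloop' : ∀ e ∈ s(a, b) ::ₘ R, ¬e.IsDiag := by
    rintro e he
    rcases Multiset.mem_cons.mp he with rfl | he
    exacts [Sym2.mk_isDiag_iff.not.mpr hab, hRloop e he]
  have hlt : Multiset.card (s(a, b) ::ₘ R) < n := by rw [Multiset.card_cons]; omega
  exact (ih _ hlt hloop' hsp rfl).subdivide hab hvR hvN.1 hvN.2.1 hvN.2.2

end Forests

section MaxIndep2

variable {V : Type} {G : SimpleGraph V}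

lemma gFreedom_eq [Finite V] (G : SimpleGraph V) :
    gFreedom G = 2 * (Nat.card V : ℤ) - G.edgeSet.ncard := by
  rw [gFreedom, Set.ncard_univ]

lemma TwoSpanningTrees.maxIndep2 [Finite V] (h : TwoSpanningTrees G) : MaxIndep2 G := by
  obtain ⟨E₁, E₂, hE, hdisj, h₁, h₂⟩ := h
  have hG : G ≤ fromEdgeSet E₁ ⊔ fromEdgeSet E₂ := by
    rw [← fromEdgeSet_union, hE, fromEdgeSet_edgeSet]
  refine ⟨fun H hH => ?_, ?_⟩
  · have := H.ncard_edgeSet_add_two_le hG h₁.isAcyclic h₂.isAcyclic hH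
    rw [subFreedom]
    omega
  · have hcard₁ := (isTree_iff_connected_and_card.mp h₁).2
    have hcard₂ := (isTree_iff_connected_and_card.mp h₂).2
    rw [edgeSet_fromEdgeSet_of_subset (hE ▸ Set.subset_union_left)] at hcard₁
    rw [edgeSet_fromEdgeSet_of_subset (hE ▸ Set.subset_union_right)] at hcard₂
    rw [gFreedom_eq, ← hE, Set.ncard_union_eq hdisj]
    rw [Nat.card_coe_set_eq] at hcard₁ hcard₂
    omega

lemma Indep2.isSparse [Fintype V] [DecidableEq V] [Fintype G.edgeSet] (h : Indep2 G) :
    IsSparse G.edgeFinset.val := by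
  intro W hW
  have hH := h ((⊤ : G.Subgraph).induce W) (by simpa using hW)
  have hedges :
      ((⊤ : G.Subgraph).induce W).edgeSet = ↑(G.edgeFinset.filter (· ∈ W.sym2)) := by
    ext e
    induction e using Sym2.ind with
    | _ x y =>
      simp only [Subgraph.mem_edgeSet, Subgraph.induce_adj, SetLike.mem_coe, Subgraph.top_adj,
        mem_sym2_iff, coe_filter, mem_edgeFinset, Set.mem_ofPred_eq, mem_edgeSet, Sym2.mem_iff,
        forall_eq_or_imp, forall_eq]
      tauto
  rw [subFreedom, hedges, Set.ncard_coe_finset] at hH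
  simp only [Subgraph.induce_verts, Set.ncard_coe_finset] at hH
  rw [edgesWithin, Multiset.countP_eq_card_filter, ← Finset.filter_val, Finset.card_val]
  omega

lemma twoSpanningTrees_of_hasTwoForests [Fintype V] [DecidableEq V] [Fintype G.edgeSet]
    (h : HasTwoForests G.edgeFinset.val) (hcard : #G.edgeFinset + 2 = 2 * Fintype.card V) :
    TwoSpanningTrees G := by
  obtain ⟨F₁, F₂, h₁, h₂, hF⟩ := h
  have hmem : ∀ e, e ∈ F₁ ∨ e ∈ F₂ ↔ e ∈ G.edgeSet := fun e => by
    rw [← Finset.mem_val, ← Finset.mem_val, ← Multiset.mem_add, hF, Finset.mem_val,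
      mem_edgeFinset]
  have hsub₁ : (F₁ : Set (Sym2 V)) ⊆ G.edgeSet := fun e he => (hmem e).mp (.inl he)
  have hsub₂ : (F₂ : Set (Sym2 V)) ⊆ G.edgeSet := fun e he => (hmem e).mp (.inr he)
  have hsum : #F₁ + #F₂ = #G.edgeFinset := by simpa using congrArg Multiset.card hF
  have : Nonempty V := Fintype.card_pos_iff.mp (by omega)
  have hcardF : ∀ F : Finset (Sym2 V), (F : Set (Sym2 V)) ⊆ G.edgeSet →
      Nat.card (fromEdgeSet (F : Set (Sym2 V))).edgeSet = #F := fun F hF => by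
    rw [edgeSet_fromEdgeSet_of_subset hF, Nat.card_coe_set_eq, Set.ncard_coe_finset]
  have hcard₁ := h₁.card_edgeSet_add_one_le
  have hcard₂ := h₂.card_edgeSet_add_one_le
  rw [hcardF _ hsub₁, Nat.card_eq_fintype_card] at hcard₁
  rw [hcardF _ hsub₂, Nat.card_eq_fintype_card] at hcard₂
  refine ⟨F₁, F₂, Set.ext hmem, ?_, h₁.isTree_of_card ?_, h₂.isTree_of_card ?_⟩
  · rw [Finset.disjoint_coe, ← Finset.disjoint_val]
    exact (Multiset.nodup_add.mp (hF ▸ G.edgeFinset.nodup)).2.2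
  · rw [hcardF _ hsub₁, Nat.card_eq_fintype_card]
    omega
  · rw [hcardF _ hsub₂, Nat.card_eq_fintype_card]
    omega

end MaxIndep2

theorem maxIndep2_iff_twoSpanningTrees_general {V : Type} [Fintype V]
    (G : SimpleGraph V) :
    MaxIndep2 G ↔ TwoSpanningTrees G := by
  classical
  refine ⟨fun ⟨hI, hF⟩ => twoSpanningTrees_of_hasTwoForests ?_ ?_,
    TwoSpanningTrees.maxIndep2⟩
  · exact hI.isSparse.hasTwoForests fun e he => G.not_isDiag_of_mem_edgeSet (mem_edgeFinset.mp he)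
  · rw [gFreedom_eq, Nat.card_eq_fintype_card, ← coe_edgeFinset, Set.ncard_coe_finset] at hF
    omega

/-- A finite connected simple graph with at least one edge is
maximally independent of type 2 if and only if it is an edge-disjoint union of
two spanning trees. -/
theorem maxIndep2_iff_twoSpanningTrees {V : Type} [Fintype V]
    (G : SimpleGraph V) (hconn : G.Connected) (hE : G.edgeSet.Nonempty) :
    MaxIndep2 G ↔ TwoSpanningTrees G :=
  maxIndep2_iff_twoSpanningTrees_general G
end
end

section
/- Let G be a Laman graph, let G → G' be a Henneberg 2 move, and let (G,p) and (G',p') be generic frameworks in ℝ². If (G,p) is isostatic (minimally infinitesimally rigid) in ℝ², then (G',p') is isostatic in ℝ². -/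
open SimpleGraph

noncomputable section

open scoped RealInnerProductSpace

abbrev E2 := EuclideanSpace ℝ (Fin 2)

/-- A framework `p` in the plane is generic if the `2|V|` coordinates of its
framework points are algebraically independent over `ℚ`. -/
def Generic2 {V : Type} (p : V → E2) : Prop :=
  AlgebraicIndependent ℚ (fun vi : V × Fin 2 => p vi.1 vi.2)

/-- `u` is an infinitesimal flex of the plane framework `(G,p)`. -/
def InfFlex2 {V : Type} (G : SimpleGraph V) (p u : V → E2) : Prop :=
  ∀ a b : V, G.Adj a b → ⟪u a - u b, p a - p b⟫ = 0

/-- `u` is a rigid-motion flex of the framework vector `p`. -/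
def RigidFlex2 {V : Type} (p u : V → E2) : Prop :=
  ∀ a b : V, ⟪u a - u b, p a - p b⟫ = 0

/-- Infinitesimal rigidity in the plane: every infinitesimal flex is a
rigid-motion flex. -/
def InfRigid2 {V : Type} (G : SimpleGraph V) (p : V → E2) : Prop :=
  ∀ u : V → E2, InfFlex2 G p u → RigidFlex2 p u

/-- Isostatic (minimally infinitesimally rigid) in the plane. -/
def Isostatic2 {V : Type} (G : SimpleGraph V) (p : V → E2) : Prop :=
  InfRigid2 G p ∧ ∀ e ∈ G.edgeSet, ¬ InfRigid2 (G.deleteEdges {e}) p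

/-!
For points in general position the rigid motions form a 3-dimensional space of infinitesimal
flexes, so a framework is infinitesimally rigid iff its rigidity matrix has rank `2|V| - 3`.
A Laman graph has `2|V| - 3` edges, so `(G, p)` being isostatic means that the rows of its
rigidity matrix are independent; once the same is shown for `(G', p')`, minimality follows by
counting edges.

Independence of the rows is the non-vanishing of their Gram determinant, a polynomial with
rational coefficients in the coordinates, so at the generic `p'` it follows from independence
at any single placement `q`. Put the new vertex `w` at the midpoint of `p u` and `p v`.
Equilibrium at `w` of a self-stress of `(G', q)` forces zero stress on `wz` (as `p z` is off the
line `uv`) and equal stresses on `wu` and `wv`; these then act on `u` and `v` like a stress on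
the broken edge `uv`, so they come from a self-stress of `(G, p)`, which vanishes.
-/

open Matrix MvPolynomial

lemma Matrix.rank_eq_card_iff_det_ne_zero {n K : Type*} [Fintype n] [DecidableEq n] [Field K]
    (A : Matrix n n K) : A.rank = Fintype.card n ↔ A.det ≠ 0 := by
  refine ⟨fun h => ?_, Matrix.rank_of_det_ne_zero⟩
  have hrange : LinearMap.range A.mulVecLin = ⊤ :=
    Submodule.eq_top_of_finrank_eq (h.trans (Module.finrank_fintype_fun_eq_card K).symm)
  rw [← isUnit_iff_ne_zero, ← Matrix.isUnit_iff_isUnit_det, ← Matrix.mulVec_surjective_iff_isUnit]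
  exact LinearMap.range_eq_top.1 hrange

lemma Matrix.rank_eq_card_iff_linearIndependent_row {m n K : Type*} [Fintype m] [Fintype n]
    [Field K] (A : Matrix m n K) : A.rank = Fintype.card m ↔ LinearIndependent K A.row := by
  rw [A.rank_eq_finrank_span_row, linearIndependent_iff_card_eq_finrank_span, Set.finrank,
    eq_comm]

section Plane

lemma inner_eq_coord (x y : E2) : ⟪x, y⟫ = x 0 * y 0 + x 1 * y 1 := by
  simp [PiLp.inner_apply, Fin.sum_univ_two, mul_comm]

def cross (x y : E2) : ℝ := x 0 * y 1 - x 1 * y 0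

lemma eq_zero_of_inner_eq_zero_of_cross_ne_zero {x y z : E2} (hxy : cross x y ≠ 0)
    (hx : ⟪z, x⟫ = 0) (hy : ⟪z, y⟫ = 0) : z = 0 := by
  rw [inner_eq_coord] at hx hy
  have h0 : z 0 * cross x y = 0 := by unfold cross; linear_combination y 1 * hx - x 1 * hy
  have h1 : z 1 * cross x y = 0 := by unfold cross; linear_combination x 0 * hy - y 0 * hx
  ext i
  fin_cases i
  · simpa [hxy] using h0
  · simpa [hxy] using h1

lemma eq_and_eq_zero_of_midpoint_equilibrium {a b c : E2} {s t r : ℝ}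
    (habc : cross (b - a) (c - a) ≠ 0)
    (h : s • (midpoint ℝ a b - a) + t • (midpoint ℝ a b - b) + r • (midpoint ℝ a b - c) = 0) :
    s = t ∧ r = 0 := by
  have h0 := congrArg (· 0) h
  have h1 := congrArg (· 1) h
  simp only [midpoint_eq_smul_add, invOf_eq_inv, PiLp.add_apply, PiLp.sub_apply,
    PiLp.smul_apply, smul_eq_mul, PiLp.zero_apply] at h0 h1
  unfold cross at habc
  simp only [PiLp.sub_apply] at habc
  have hr : r * ((b 0 - a 0) * (c 1 - a 1) - (b 1 - a 1) * (c 0 - a 0)) = 0 := by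
    linear_combination (b 1 - a 1) * h0 - (b 0 - a 0) * h1
  have hr0 : r = 0 := by simpa [habc] using hr
  subst hr0
  have hst : (s - t) * ((b 0 - a 0) * (c 1 - a 1) - (b 1 - a 1) * (c 0 - a 0)) = 0 := by
    linear_combination 2 * (c 1 - a 1) * h0 - 2 * (c 0 - a 0) * h1
  exact ⟨sub_eq_zero.1 (by simpa [habc] using hst), rfl⟩

def rot (x : E2) : E2 := !₂[-x 1, x 0]

lemma cross_rot_self_ne_zero {x : E2} (hx : x ≠ 0) : cross x (rot x) ≠ 0 := by
  have h : cross x (rot x) = ⟪x, x⟫ := by rw [inner_eq_coord]; simp [cross, rot]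
  exact h ▸ inner_self_ne_zero.2 hx

end Plane

section RigidityMatrix

variable {V ι : Type}

def coords (u : V → E2) : V × Fin 2 → ℝ := fun xi => u xi.1 xi.2

lemma coords_surjective : Function.Surjective (coords : (V → E2) → V × Fin 2 → ℝ) :=
  fun c => ⟨fun x => WithLp.toLp 2 fun i => c (x, i), rfl⟩

def edgeStrain (p u : V → E2) : Sym2 V → ℝ :=
  Sym2.lift ⟨fun a b => ⟪u a - u b, p a - p b⟫, fun a b => by
    dsimp only; rw [← neg_sub (u a), ← neg_sub (p a), inner_neg_neg]⟩

@[simp]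
lemma edgeStrain_mk (p u : V → E2) (a b : V) :
    edgeStrain p u s(a, b) = ⟪u a - u b, p a - p b⟫ := rfl

lemma infFlex2_iff_edgeStrain {G : SimpleGraph V} {p u : V → E2} :
    InfFlex2 G p u ↔ ∀ e ∈ G.edgeSet, edgeStrain p u e = 0 := by
  simp [InfFlex2, Sym2.forall]

lemma rigidFlex2_iff_edgeStrain {p u : V → E2} :
    RigidFlex2 p u ↔ ∀ e, edgeStrain p u e = 0 := by
  simp [RigidFlex2, Sym2.forall]

variable [DecidableEq V]

/-- The coordinates `c` may lie in any commutative ring, so that they can also be the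
variables of a polynomial ring. -/
def edgeRow {R : Type*} [CommRing R] (c : V × Fin 2 → R) : Sym2 V → V × Fin 2 → R :=
  fun e xi => Sym2.lift ⟨fun a b =>
    ((if xi.1 = a then 1 else 0) - (if xi.1 = b then 1 else 0)) * (c (a, xi.2) - c (b, xi.2)),
    fun a b => by ring⟩ e

@[simp]
lemma edgeRow_mk {R : Type*} [CommRing R] (c : V × Fin 2 → R) (a b x : V) (i : Fin 2) :
    edgeRow c s(a, b) (x, i) =
      ((if x = a then 1 else 0) - (if x = b then 1 else 0)) * (c (a, i) - c (b, i)) := rfl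

def rigidityMatrix {R : Type*} [CommRing R] (ends : ι → Sym2 V) (c : V × Fin 2 → R) :
    Matrix ι (V × Fin 2) R :=
  Matrix.of fun i => edgeRow c (ends i)

lemma rigidityMatrix_map {R S : Type*} [CommRing R] [CommRing S] (f : R →+* S)
    (ends : ι → Sym2 V) (c : V × Fin 2 → R) :
    (rigidityMatrix ends c).map f = rigidityMatrix ends (f ∘ c) := by
  ext i ⟨x, j⟩
  simp only [rigidityMatrix, Matrix.map_apply, Matrix.of_apply]
  induction ends i using Sym2.ind with
  | _ a b => simp [apply_ite f]

variable [Fintype V]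

lemma edgeRow_dotProduct_coords (p u : V → E2) (e : Sym2 V) :
    edgeRow (coords p) e ⬝ᵥ coords u = edgeStrain p u e := by
  induction e using Sym2.ind with
  | _ a b =>
    simp only [dotProduct, coords, Fintype.sum_prod_type, edgeRow_mk, sub_mul, ite_mul, one_mul,
      zero_mul, Finset.sum_sub_distrib, Finset.sum_ite_irrel, Fin.sum_univ_two,
      Finset.sum_const_zero, Finset.sum_ite_eq', Finset.mem_univ, if_true, edgeStrain_mk,
      inner_eq_coord, PiLp.sub_apply]
    ring

def flexSpace (ends : ι → Sym2 V) (p : V → E2) : Submodule ℝ (V × Fin 2 → ℝ) :=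
  LinearMap.ker (rigidityMatrix ends (coords p)).mulVecLin

def rigidMotions (p : V → E2) : Submodule ℝ (V × Fin 2 → ℝ) :=
  flexSpace (id : Sym2 V → Sym2 V) p

lemma coords_mem_flexSpace_iff {ends : ι → Sym2 V} {p u : V → E2} :
    coords u ∈ flexSpace ends p ↔ ∀ i, edgeStrain p u (ends i) = 0 := by
  simp only [flexSpace, LinearMap.mem_ker, Matrix.mulVecLin_apply, funext_iff, Matrix.mulVec,
    rigidityMatrix, Matrix.of_apply, edgeRow_dotProduct_coords, Pi.zero_apply]

lemma rigidMotions_le_flexSpace (ends : ι → Sym2 V) (p : V → E2) :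
    rigidMotions p ≤ flexSpace ends p := by
  intro c hc
  obtain ⟨u, rfl⟩ := coords_surjective c
  rw [rigidMotions, coords_mem_flexSpace_iff] at hc
  exact coords_mem_flexSpace_iff.2 fun i => hc (ends i)

lemma rank_add_finrank_flexSpace (ends : ι → Sym2 V) (p : V → E2) :
    (rigidityMatrix ends (coords p)).rank + Module.finrank ℝ (flexSpace ends p) =
      2 * Fintype.card V := by
  rw [Matrix.rank, flexSpace, LinearMap.finrank_range_add_finrank_ker,
    Module.finrank_fintype_fun_eq_card, Fintype.card_prod, Fintype.card_fin, mul_comm]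

end RigidityMatrix

section EdgeRow

variable {V W : Type} [DecidableEq V] [DecidableEq W] {R : Type*} [CommRing R]

lemma edgeRow_of_notMem {c : V × Fin 2 → R} {e : Sym2 V} {x : V} (hx : x ∉ e) (j : Fin 2) :
    edgeRow c e (x, j) = 0 := by
  induction e using Sym2.ind with
  | _ a b =>
    rw [Sym2.mem_iff, not_or] at hx
    simp [hx.1, hx.2]

lemma edgeRow_map_apply (φ : V ↪ W) {c : V × Fin 2 → R} {c' : W × Fin 2 → R}
    (hc : ∀ a j, c' (φ a, j) = c (a, j)) (e : Sym2 V) (x : V) (j : Fin 2) :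
    edgeRow c' (e.map φ) (φ x, j) = edgeRow c e (x, j) := by
  induction e using Sym2.ind with
  | _ a b => simp [φ.injective.eq_iff, hc]

lemma edgeRow_mk_map_apply (φ : V ↪ W) {c : V × Fin 2 → R} {c' : W × Fin 2 → R}
    (hc : ∀ a j, c' (φ a, j) = c (a, j)) {w : W} {x : V} (hx : φ x ≠ w) (m : V) (j : Fin 2) :
    edgeRow c' s(w, φ m) (φ x, j) = -(if x = m then 1 else 0) * (c' (w, j) - c (m, j)) := by
  simp [hx, φ.injective.eq_iff, hc]

end EdgeRow

section EdgeIndexing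

variable {V ι : Type}

def IsEdgeIndexing (G : SimpleGraph V) (ends : ι → Sym2 V) : Prop :=
  Function.Injective ends ∧ Set.range ends = G.edgeSet

namespace IsEdgeIndexing

variable {G : SimpleGraph V} {ends : ι → Sym2 V}

lemma card_eq [Fintype ι] (h : IsEdgeIndexing G ends) :
    Fintype.card ι = G.edgeSet.ncard := by
  rw [← h.2, Set.ncard_range_of_injective h.1, Nat.card_eq_fintype_card]

lemma deleteEdges (h : IsEdgeIndexing G ends) (i₀ : ι) :
    IsEdgeIndexing (G.deleteEdges {ends i₀}) fun i : {i // i ≠ i₀} => ends i := by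
  refine ⟨h.1.comp Subtype.val_injective, ?_⟩
  ext e
  simp only [Set.mem_range, Subtype.exists, SimpleGraph.edgeSet_deleteEdges, Set.mem_sdiff,
    Set.mem_singleton_iff, ← h.2]
  constructor
  · rintro ⟨i, hi, rfl⟩
    exact ⟨⟨i, rfl⟩, fun he => hi (h.1 he)⟩
  · rintro ⟨⟨i, rfl⟩, hi⟩
    exact ⟨i, fun he => hi (he ▸ rfl), rfl⟩

lemma infFlex2_iff [Fintype V] [DecidableEq V] (h : IsEdgeIndexing G ends) {p u : V → E2} :
    InfFlex2 G p u ↔ coords u ∈ flexSpace ends p := by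
  rw [infFlex2_iff_edgeStrain, coords_mem_flexSpace_iff, ← h.2, Set.forall_mem_range]

lemma infRigid2_iff_flexSpace_le [Fintype V] [DecidableEq V] (h : IsEdgeIndexing G ends)
    {p : V → E2} : InfRigid2 G p ↔ flexSpace ends p ≤ rigidMotions p := by
  refine ⟨fun hG c hc => ?_, fun hle u hu => ?_⟩
  · obtain ⟨u, rfl⟩ := coords_surjective c
    exact coords_mem_flexSpace_iff.2 (rigidFlex2_iff_edgeStrain.1 (hG u (h.infFlex2_iff.2 hc)))
  · exact rigidFlex2_iff_edgeStrain.2 (coords_mem_flexSpace_iff.1 (hle (h.infFlex2_iff.1 hu)))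

end IsEdgeIndexing

lemma card_add_three_of_gFreedom [Fintype V] [Fintype ι] {G : SimpleGraph V}
    {ends : ι → Sym2 V} (h : IsEdgeIndexing G ends) (hG : gFreedom G = 3) :
    Fintype.card ι + 3 = 2 * Fintype.card V := by
  rw [gFreedom, Set.ncard_univ, Nat.card_eq_fintype_card, ← h.card_eq] at hG
  omega

end EdgeIndexing

section RigidMotions

variable {V : Type}

def InGeneralPosition (p : V → E2) : Prop :=
  Function.Injective p ∧
    ∀ a b c, a ≠ b → c ≠ a → c ≠ b → cross (p b - p a) (p c - p a) ≠ 0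

lemma three_le_finrank_rigidMotions [Fintype V] [DecidableEq V] {p : V → E2} {a b : V}
    (hab : p a ≠ p b) :
    3 ≤ Module.finrank ℝ (rigidMotions p) := by
  set T : Fin 3 → V × Fin 2 → ℝ :=
    ![coords fun _ => EuclideanSpace.single 0 1, coords fun _ => EuclideanSpace.single 1 1,
      coords fun x => rot (p x)] with hT
  have htrans (c : E2) : coords (fun _ : V => c) ∈ rigidMotions p :=
    coords_mem_flexSpace_iff.2 fun e => by induction e using Sym2.ind; simp
  have hrot : coords (fun x => rot (p x)) ∈ rigidMotions p :=
    coords_mem_flexSpace_iff.2 fun e => by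
      induction e using Sym2.ind
      simp only [rot, id_eq, edgeStrain_mk, inner_eq_coord, PiLp.sub_apply, cons_val_zero,
        cons_val_one, cons_val_fin_one]
      ring
  have hmem : ∀ k, T k ∈ rigidMotions p := by
    intro k
    fin_cases k
    exacts [htrans _, htrans _, hrot]
  have hind : LinearIndependent ℝ T := by
    rw [Fintype.linearIndependent_iff]
    intro g hg
    have h := fun x i => congrFun hg (x, i)
    simp only [hT, rot, coords, Finset.sum_apply, Pi.smul_apply, PiLp.single_apply, smul_eq_mul,
      Fin.sum_univ_three, cons_val_zero, cons_val_one, cons_val_two, cons_val_fin_one, mul_ite,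
      mul_one, mul_zero, Pi.zero_apply, Fin.forall_fin_two, if_true, if_false, zero_ne_one,
      one_ne_zero, add_zero, zero_add, mul_neg, head_cons, tail_cons] at h
    obtain ⟨⟨ha0, ha1⟩, ⟨hb0, hb1⟩⟩ := And.intro (h a) (h b)
    have hg2 : g 2 = 0 := by
      by_contra hg
      refine hab (PiLp.ext (Fin.forall_fin_two.2 ⟨?_, ?_⟩))
      · exact mul_left_cancel₀ hg (by linear_combination ha1 - hb1)
      · exact mul_left_cancel₀ hg (by linear_combination hb0 - ha0)
    intro k
    fin_cases k
    · simpa [hg2] using ha0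
    · simpa [hg2] using ha1
    · exact hg2
  calc 3 = Module.finrank ℝ (Submodule.span ℝ (Set.range T)) := by
        rw [finrank_span_eq_card hind, Fintype.card_fin]
    _ ≤ _ := Submodule.finrank_mono (Submodule.span_le.2 (Set.range_subset_iff.2 hmem))

lemma eq_zero_of_rigidFlex2 {p : V → E2} (hp : InGeneralPosition p) {a b : V} (hab : a ≠ b)
    {u : V → E2} (hu : RigidFlex2 p u) (ha : u a = 0) (hb : ⟪u b, rot (p b - p a)⟫ = 0) :
    u = 0 := by
  have hb' : u b = 0 :=
    eq_zero_of_inner_eq_zero_of_cross_ne_zero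
      (cross_rot_self_ne_zero (sub_ne_zero.2 (hp.1.ne hab.symm))) (by simpa [ha] using hu b a) hb
  funext c
  by_cases hca : c = a
  · exact hca ▸ ha
  by_cases hcb : c = b
  · exact hcb ▸ hb'
  refine eq_zero_of_inner_eq_zero_of_cross_ne_zero (x := p c - p a) (y := p c - p b) ?_
    (by simpa [ha] using hu c a) (by simpa [hb'] using hu c b)
  convert hp.2 a b c hab hca hcb using 1
  simp only [cross, PiLp.sub_apply]
  ring

lemma finrank_rigidMotions_le_three [Fintype V] [DecidableEq V] {p : V → E2}
    (hp : InGeneralPosition p) {a b : V} (hab : a ≠ b) : Module.finrank ℝ (rigidMotions p) ≤ 3 := by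
  set d := rot (p b - p a)
  let L : (V × Fin 2 → ℝ) →ₗ[ℝ] (Fin 3 → ℝ) := LinearMap.pi
    ![LinearMap.proj (a, 0), LinearMap.proj (a, 1),
      d 0 • LinearMap.proj (b, 0) + d 1 • LinearMap.proj (b, 1)]
  have hinj : Function.Injective (L.domRestrict (rigidMotions p)) := by
    rw [← LinearMap.ker_eq_bot, eq_bot_iff]
    rintro ⟨c, hc⟩ hker
    obtain ⟨u, rfl⟩ := coords_surjective c
    have hL := congrFun (LinearMap.mem_ker.1 hker)
    have hu : u = 0 := by
      refine eq_zero_of_rigidFlex2 hp hab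
        (rigidFlex2_iff_edgeStrain.2 (coords_mem_flexSpace_iff.1 hc))
        (PiLp.ext (Fin.forall_fin_two.2
          ⟨by simpa [L, coords] using hL 0, by simpa [L, coords] using hL 1⟩)) ?_
      rw [inner_eq_coord]
      simpa [L, coords, mul_comm] using hL 2
    subst hu
    rfl
  simpa using LinearMap.finrank_le_finrank_of_injective hinj

lemma finrank_rigidMotions [Fintype V] [DecidableEq V] [Nontrivial V] {p : V → E2}
    (hp : InGeneralPosition p) :
    Module.finrank ℝ (rigidMotions p) = 3 := by
  obtain ⟨a, b, hab⟩ := exists_pair_ne V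
  exact le_antisymm (finrank_rigidMotions_le_three hp hab)
    (three_le_finrank_rigidMotions (hp.1.ne hab))

end RigidMotions

section RankCriterion

variable {V ι : Type} [Fintype V] [DecidableEq V] [Nontrivial V] {G : SimpleGraph V}
  {ends : ι → Sym2 V} {p : V → E2}

lemma infRigid2_iff_rank_eq (h : IsEdgeIndexing G ends) (hp : InGeneralPosition p) :
    InfRigid2 G p ↔ (rigidityMatrix ends (coords p)).rank = 2 * Fintype.card V - 3 := by
  have hsum := rank_add_finrank_flexSpace ends p
  have h3 := finrank_rigidMotions hp
  have hle := rigidMotions_le_flexSpace ends p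
  have hV : 1 < Fintype.card V := Fintype.one_lt_card
  rw [h.infRigid2_iff_flexSpace_le]
  constructor
  · intro hflex
    rw [le_antisymm hflex hle] at hsum
    omega
  · intro hrank
    exact (Submodule.eq_of_le_of_finrank_eq hle (by omega)).ge

lemma isostatic2_of_rank_eq_card [Fintype ι] [DecidableEq ι] (h : IsEdgeIndexing G ends)
    (hp : InGeneralPosition p) (hcount : Fintype.card ι + 3 = 2 * Fintype.card V)
    (hrank : (rigidityMatrix ends (coords p)).rank = Fintype.card ι) : Isostatic2 G p := by
  refine ⟨(infRigid2_iff_rank_eq h hp).2 (by omega), fun e he hrig => ?_⟩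
  obtain ⟨i₀, rfl⟩ : e ∈ Set.range ends := h.2 ▸ he
  have hdel := (infRigid2_iff_rank_eq (h.deleteEdges i₀) hp).1 hrig
  have hle := Matrix.rank_le_card_height
    (rigidityMatrix (fun i : {i // i ≠ i₀} => ends i) (coords p))
  have hpos : 0 < Fintype.card ι := Fintype.card_pos_iff.2 ⟨i₀⟩
  simp only [ne_eq, Fintype.card_subtype_compl, Fintype.card_unique] at hle
  rw [hdel] at hle
  omega

end RankCriterion

section Generic

variable {V ι : Type} {p : V → E2}

lemma Generic2.aeval_ne_zero (hp : Generic2 p) {f : MvPolynomial (V × Fin 2) ℚ}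
    (x : V × Fin 2 → ℝ) (hx : aeval x f ≠ 0) : aeval (coords p) f ≠ 0 := by
  have hf : f ≠ 0 := by
    rintro rfl
    exact hx (map_zero _)
  exact fun h => hf (algebraicIndependent_iff_injective_aeval.1 hp (h.trans (map_zero _).symm))

lemma Generic2.inGeneralPosition [DecidableEq V] (hp : Generic2 p) : InGeneralPosition p := by
  refine ⟨fun a b hab => congrArg Prod.fst (hp.injective (a₁ := (a, 0)) (a₂ := (b, 0))
    (congrFun (congrArg _ hab) 0)), fun a b c hab hca hcb => ?_⟩
  have key := hp.aeval_ne_zero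
    (f := (X (b, 0) - X (a, 0)) * (X (c, 1) - X (a, 1)) -
      (X (b, 1) - X (a, 1)) * (X (c, 0) - X (a, 0)))
    (fun vi => if vi = (b, 0) ∨ vi = (c, 1) then 1 else 0)
    (by simp [hab, hcb, hca.symm, hcb.symm])
  simpa [cross, coords] using key

lemma rigidityMatrix_eq_map_aeval [DecidableEq V] (ends : ι → Sym2 V) (x : V × Fin 2 → ℝ) :
    rigidityMatrix ends x =
      (rigidityMatrix ends (X : V × Fin 2 → MvPolynomial (V × Fin 2) ℚ)).map
        (aeval x).toRingHom := by
  rw [rigidityMatrix_map]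
  congr
  funext vi
  simp

lemma Generic2.rank_rigidityMatrix_eq_card [Fintype V] [DecidableEq V] [Fintype ι]
    [DecidableEq ι] (hp : Generic2 p) {ends : ι → Sym2 V} (q : V → E2)
    (hq : (rigidityMatrix ends (coords q)).rank = Fintype.card ι) :
    (rigidityMatrix ends (coords p)).rank = Fintype.card ι := by
  rw [← Matrix.rank_self_mul_transpose, Matrix.rank_eq_card_iff_det_ne_zero,
    rigidityMatrix_eq_map_aeval, ← Matrix.transpose_map, ← Matrix.map_mul,
    ← RingHom.mapMatrix_apply, ← RingHom.map_det] at hq ⊢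
  exact hp.aeval_ne_zero _ hq

end Generic

section Henneberg2

variable {α β ι : Type}

def henneberg2Ends (ends : ι → Sym2 α) (i₀ : ι) (φ : α ↪ β) (w : β) (u v z : α) :
    {i // i ≠ i₀} ⊕ Fin 3 → Sym2 β :=
  Sum.elim (fun i => (ends i).map φ) fun k => s(w, φ (![u, v, z] k))

lemma card_eq_card_add_one_of_range {φ : α ↪ β} {w : β} [Fintype α] [Fintype β]
    (hcover : ∀ y, y ∈ Set.range φ ∨ y = w) (hw : w ∉ Set.range φ) :
    Fintype.card β = Fintype.card α + 1 := by
  rw [← Fintype.card_option]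
  refine (Fintype.card_of_bijective ⟨(φ.optionElim w hw).injective, fun y => ?_⟩).symm
  rcases hcover y with ⟨a, rfl⟩ | rfl
  exacts [⟨some a, rfl⟩, ⟨none, rfl⟩]

lemma card_henneberg2_add_three [Fintype α] [Fintype β] [Fintype ι] [DecidableEq ι] (i₀ : ι)
    (hcount : Fintype.card ι + 3 = 2 * Fintype.card α)
    (hβ : Fintype.card β = Fintype.card α + 1) :
    Fintype.card ({i // i ≠ i₀} ⊕ Fin 3) + 3 = 2 * Fintype.card β := by
  have hpos : 0 < Fintype.card ι := Fintype.card_pos_iff.2 ⟨i₀⟩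
  simp only [Fintype.card_sum, ne_eq, Fintype.card_subtype_compl, Fintype.card_unique,
    Fintype.card_fin]
  omega

end Henneberg2

section Henneberg2Indexing

variable {α β ι : Type} {G : SimpleGraph α} {G' : SimpleGraph β} {ends : ι → Sym2 α} {i₀ : ι}
  {φ : α ↪ β} {w : β} {u v z : α}

lemma henneberg2Ends_injective (h : IsEdgeIndexing G ends) (hw : w ∉ Set.range φ)
    (huv : u ≠ v) (hzu : z ≠ u) (hzv : z ≠ v) :
    Function.Injective (henneberg2Ends ends i₀ φ w u v z) := by
  refine Function.Injective.sumElim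
    ((Sym2.map.injective φ.injective).comp (h.1.comp Subtype.val_injective)) ?_ ?_
  · intro k l hkl
    have := φ.injective (Sym2.congr_right.1 hkl)
    fin_cases k <;> fin_cases l <;> simp_all [eq_comm]
  · intro i k hik
    obtain ⟨a, -, ha⟩ := Sym2.mem_map.1 (hik ▸ Sym2.mem_mk_left w _ : w ∈ (ends i).map φ)
    exact hw ⟨a, ha⟩

lemma IsEdgeIndexing.mk_mem_range_map_iff (h : IsEdgeIndexing G ends) (hi₀ : ends i₀ = s(u, v)) (x y : β) :
    s(x, y) ∈ Set.range (fun i : {i // i ≠ i₀} => (ends i).map φ) ↔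
      ∃ a b, G.Adj a b ∧ ¬ s(a, b) = s(u, v) ∧ x = φ a ∧ y = φ b := by
  constructor
  · rintro ⟨⟨i, hi⟩, hixy⟩
    dsimp only at hixy
    have hne : ends i ≠ s(u, v) := hi₀ ▸ h.1.ne hi
    have hmem : ends i ∈ G.edgeSet := h.2 ▸ Set.mem_range_self i
    revert hixy hne hmem
    induction ends i using Sym2.ind with
    | _ a b =>
      intro hixy hne hmem
      rw [Sym2.map_mk, Sym2.eq_iff] at hixy
      rcases hixy with ⟨rfl, rfl⟩ | ⟨rfl, rfl⟩
      · exact ⟨a, b, hmem, hne, rfl, rfl⟩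
      · exact ⟨b, a, G.adj_symm hmem, by rwa [Sym2.eq_swap], rfl, rfl⟩
  · rintro ⟨a, b, hab, hne, rfl, rfl⟩
    obtain ⟨i, hi⟩ : s(a, b) ∈ Set.range ends := h.2 ▸ hab
    exact ⟨⟨i, fun hii => hne (hi ▸ hii ▸ hi₀)⟩, by simp [hi]⟩

lemma mk_mem_range_newEdges_iff (x y : β) :
    s(x, y) ∈ Set.range (fun k => s(w, φ (![u, v, z] k))) ↔
      (x = w ∧ (y = φ u ∨ y = φ v ∨ y = φ z)) ∨ (y = w ∧ (x = φ u ∨ x = φ v ∨ x = φ z)) := by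
  simp only [Set.mem_range, Fin.exists_fin_succ, Sym2.eq_iff, cons_val_zero,
    Fin.succ_zero_eq_one, cons_val_one, Fin.succ_one_eq_two, cons_val_two, IsEmpty.exists_iff,
    or_false]
  tauto

lemma isEdgeIndexing_henneberg2 (h : IsEdgeIndexing G ends) (hi₀ : ends i₀ = s(u, v))
    (hw : w ∉ Set.range φ) (huv : u ≠ v) (hzu : z ≠ u) (hzv : z ≠ v)
    (hadj : ∀ x y : β, G'.Adj x y ↔
      ((∃ a b : α, G.Adj a b ∧ ¬ (s(a, b) = s(u, v)) ∧ x = φ a ∧ y = φ b) ∨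
       (x = w ∧ (y = φ u ∨ y = φ v ∨ y = φ z)) ∨
       (y = w ∧ (x = φ u ∨ x = φ v ∨ x = φ z)))) :
    IsEdgeIndexing G' (henneberg2Ends ends i₀ φ w u v z) := by
  refine ⟨henneberg2Ends_injective h hw huv hzu hzv, Set.ext fun e => ?_⟩
  induction e using Sym2.ind with
  | _ x y =>
    rw [henneberg2Ends, Set.Sum.elim_range, Set.mem_union, h.mk_mem_range_map_iff hi₀,
      mk_mem_range_newEdges_iff, SimpleGraph.mem_edgeSet, hadj]

end Henneberg2Indexing

section Henneberg2Midpoint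

variable {α β ι : Type} [DecidableEq β] [Fintype ι] [DecidableEq ι] {ends : ι → Sym2 α} {i₀ : ι}
  {φ : α ↪ β} {w : β} {u v z : α}

lemma sum_smul_row_henneberg2Ends_apply (g : {i // i ≠ i₀} ⊕ Fin 3 → ℝ) (c : β × Fin 2 → ℝ)
    (y : β) (j : Fin 2) :
    (∑ i, g i • (rigidityMatrix (henneberg2Ends ends i₀ φ w u v z) c).row i) (y, j) =
      ∑ i, g (Sum.inl i) * edgeRow c ((ends i).map φ) (y, j) +
        ∑ k, g (Sum.inr k) * edgeRow c s(w, φ (![u, v, z] k)) (y, j) := by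
  simp [Fintype.sum_sum_type, Finset.sum_apply, rigidityMatrix, henneberg2Ends]

lemma henneberg2_stress_midpoint_newEdges (hw : w ∉ Set.range φ) {p : α → E2}
    (huvz : cross (p v - p u) (p z - p u) ≠ 0) {q : β → E2} (hqφ : ∀ a, q (φ a) = p a)
    (hqw : q w = midpoint ℝ (p u) (p v)) {g : {i // i ≠ i₀} ⊕ Fin 3 → ℝ}
    (hg : ∑ i, g i • (rigidityMatrix (henneberg2Ends ends i₀ φ w u v z) (coords q)).row i = 0) :
    g (Sum.inr 0) = g (Sum.inr 1) ∧ g (Sum.inr 2) = 0 := by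
  have hwφ : ∀ a, w ≠ φ a := fun a hwa => hw ⟨a, hwa.symm⟩
  have hw_notMem : ∀ e : Sym2 α, w ∉ e.map φ := fun e hwe => by
    obtain ⟨a, -, ha⟩ := Sym2.mem_map.1 hwe
    exact hwφ a ha.symm
  refine eq_and_eq_zero_of_midpoint_equilibrium huvz (PiLp.ext fun j => ?_)
  have hbal := congrFun hg (w, j)
  rw [sum_smul_row_henneberg2Ends_apply] at hbal
  simp only [PiLp.add_apply, PiLp.smul_apply, PiLp.sub_apply, PiLp.zero_apply, smul_eq_mul]
  simpa [edgeRow_of_notMem (hw_notMem _), Fin.sum_univ_three, hwφ, coords, hqφ, hqw] using hbal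

lemma rank_henneberg2_midpoint [Fintype α] [DecidableEq α] [Fintype β]
    (hi₀ : ends i₀ = s(u, v)) (hw : w ∉ Set.range φ) {p : α → E2}
    (huvz : cross (p v - p u) (p z - p u) ≠ 0)
    (hrank : (rigidityMatrix ends (coords p)).rank = Fintype.card ι)
    {q : β → E2} (hqφ : ∀ a, q (φ a) = p a) (hqw : q w = midpoint ℝ (p u) (p v)) :
    (rigidityMatrix (henneberg2Ends ends i₀ φ w u v z) (coords q)).rank =
      Fintype.card ({i // i ≠ i₀} ⊕ Fin 3) := by
  rw [Matrix.rank_eq_card_iff_linearIndependent_row, Fintype.linearIndependent_iff] at hrank ⊢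
  intro g hg
  obtain ⟨h01, h2⟩ := henneberg2_stress_midpoint_newEdges hw huvz hqφ hqw hg
  have hc : ∀ a j, coords q (φ a, j) = coords p (a, j) := fun a j => by simp [coords, hqφ]
  have hne : ∀ i : {i // i ≠ i₀}, (i : ι) ≠ i₀ := fun i => i.2
  -- equal stresses `t` on `wu` and `wv` act on `u` and `v` like the stress `t / 2` on `uv`
  let σ : ι → ℝ := fun i => if hi : i = i₀ then g (Sum.inr 0) / 2 else g (Sum.inl ⟨i, hi⟩)
  have hσ : ∀ i, σ i = 0 := by
    refine hrank σ (funext fun ⟨a, j⟩ => ?_)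
    have hbal := congrFun hg (φ a, j)
    rw [sum_smul_row_henneberg2Ends_apply] at hbal
    simp only [Fin.sum_univ_three, Matrix.cons_val_zero, Matrix.cons_val_one,
      Matrix.cons_val_two, Matrix.head_cons, Matrix.tail_cons] at hbal
    simp only [edgeRow_map_apply φ hc, edgeRow_mk_map_apply φ hc fun hw' => hw ⟨a, hw'⟩, coords,
      hqw, h2, ← h01, midpoint_eq_smul_add, PiLp.smul_apply, PiLp.add_apply, smul_eq_mul,
      invOf_eq_inv, Pi.zero_apply] at hbal
    rw [Finset.sum_apply, Fintype.sum_eq_add_sum_subtype_ne _ i₀]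
    simp only [σ, dif_pos, dif_neg (hne _), Pi.smul_apply, smul_eq_mul, Matrix.row,
      rigidityMatrix, Matrix.of_apply, hi₀, edgeRow_mk, coords, Subtype.coe_eta, Pi.zero_apply]
    linear_combination hbal
  rintro (i | k)
  · simpa [σ, i.2] using hσ i
  · fin_cases k
    · simpa [σ] using hσ i₀
    · simpa [σ, ← h01] using hσ i₀
    · exact h2

end Henneberg2Midpoint

/-- Let `G` be a Laman graph, `G → G'` a Henneberg 2 move, and
`(G,p)`, `(G',p')` generic frameworks in the plane.  If `(G,p)` is isostatic then
so is `(G',p')`. -/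
theorem henneberg2_preserves_isostatic {α β : Type} [Fintype α] [Fintype β]
    (G : SimpleGraph α) (G' : SimpleGraph β) (φ : α ↪ β) (w : β)
    (hG : Laman G) (hmove : Henneberg2Rel G G' φ w)
    (p : α → E2) (p' : β → E2) (hp : Generic2 p) (hp' : Generic2 p')
    (hiso : Isostatic2 G p) : Isostatic2 G' p' := by
  classical
  obtain ⟨hcover, hw, u, v, z, huv, hzu, hzv, hadj⟩ := hmove
  have hgp := hp.inGeneralPosition
  have hE : IsEdgeIndexing G (Subtype.val : G.edgeSet → Sym2 α) :=
    ⟨Subtype.val_injective, Subtype.range_coe⟩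
  have : Nontrivial α := ⟨⟨u, v, huv.ne⟩⟩
  have : Nontrivial β := ⟨⟨w, φ u, fun h => hw ⟨u, h.symm⟩⟩⟩
  have hcount : Fintype.card G.edgeSet + 3 = 2 * Fintype.card α :=
    card_add_three_of_gFreedom hE hG.2.2
  have hrank := (infRigid2_iff_rank_eq hE hgp).1 hiso.1
  let i₀ : G.edgeSet := ⟨s(u, v), huv⟩
  let q : β → E2 := Function.extend φ p fun _ => midpoint ℝ (p u) (p v)
  have hrank_q := rank_henneberg2_midpoint (i₀ := i₀) (z := z) rfl hw
    (hgp.2 u v z huv.ne hzu hzv) (hrank.trans (by omega)) (q := q) (φ.injective.extend_apply _ _)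
    (Function.extend_apply' _ _ _ fun ⟨a, ha⟩ => hw ⟨a, ha⟩)
  refine isostatic2_of_rank_eq_card (isEdgeIndexing_henneberg2 hE rfl hw huv.ne hzu hzv hadj)
    hp'.inGeneralPosition ?_ (hp'.rank_rigidityMatrix_eq_card q hrank_q)
  exact card_henneberg2_add_three i₀ hcount (card_eq_card_add_one_of_range hcover hw)
end
end

section
/- Let a, b, c, d ∈ ℝ³ with b = d, ‖a − b‖ = ‖a − d‖ ≠ 0 and ‖c − b‖ = ‖c − d‖ ≠ 0, and let a(·), b(·), c(·), d(·) : [0,1] → ℝ³ be continuous maps with a(0) = a, b(0) = b, c(0) = c, d(0) = d satisfying, for all t ∈ [0,1]: ‖a(t) − b(t)‖ = ‖a − b‖, ‖a(t) − d(t)‖ = ‖a − d‖, ‖c(t) − b(t)‖ = ‖c − b‖ and ‖c(t) − d(t)‖ = ‖c − d‖. Assume the function t ↦ ‖b(t) − d(t)‖ is nonconstant on every interval [0,δ) with 0 < δ < 1, and let v : [0,1] → ℝ³ be a continuous path. Then at least one of the following holds: (i) there exists δ > 0 such that ⟨b(t) − d(t), a(t) − v(t)⟩ = 0 for all t ∈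 [0,δ); (ii) at least one of the functions t ↦ ‖v(t) − b(t)‖, t ↦ ‖v(t) − d(t)‖ is nonconstant on every interval [0,δ) with δ > 0. -/
open unitInterval
open scoped RealInnerProductSpace

noncomputable section

abbrev E3 := EuclideanSpace ℝ (Fin 3)

/-- The function `f` on `[0,1]` is nonconstant on the interval `[0,δ)`. -/
def NonconstantBefore (f : unitInterval → ℝ) (δ : ℝ) : Prop :=
  ∃ s t : unitInterval, (s : ℝ) < δ ∧ (t : ℝ) < δ ∧ f s ≠ f t

lemma inner_eq_of_norm_sub_eq (x p q : E3) (h : ‖x - p‖ = ‖x - q‖) :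
    ⟪p - q, x⟫ = (‖p‖ ^ 2 - ‖q‖ ^ 2) / 2 := by
  have h2 : ‖x - p‖ ^ 2 = ‖x - q‖ ^ 2 := by rw [h]
  rw [norm_sub_sq_real, norm_sub_sq_real] at h2
  have hs : ⟪p - q, x⟫ = ⟪x, p⟫ - ⟪x, q⟫ := by
    rw [inner_sub_left, real_inner_comm p x, real_inner_comm q x]
  linarith

/-- **hinge lemma.** Let `(a₀,b₀,c₀,d₀)` be a closed hinge
framework (`b₀ = d₀`) and let `(a(t),b(t),c(t),d(t))` be a continuous flex of it
such that `t ↦ ‖b(t) - d(t)‖` is nonconstant on every interval `[0,δ)` with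
`0 < δ < 1`; let `v(t)` be a continuous path.  Then either
`⟪b(t) - d(t), a(t) - v(t)⟫ = 0` for all `t` in some interval `[0,δ)`, or one of
`t ↦ ‖v(t) - b(t)‖`, `t ↦ ‖v(t) - d(t)‖` is nonconstant on every interval
`[0,δ)`, `δ > 0`. -/
theorem hinge_lemma (a₀ b₀ c₀ d₀ : E3) (hbd : b₀ = d₀)
    (hab : ‖a₀ - b₀‖ = ‖a₀ - d₀‖) (hab0 : ‖a₀ - b₀‖ ≠ 0)
    (hcb : ‖c₀ - b₀‖ = ‖c₀ - d₀‖) (hcb0 : ‖c₀ - b₀‖ ≠ 0)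
    (a b c d : unitInterval → E3)
    (hac : Continuous a) (hbc : Continuous b) (hcc : Continuous c)
    (hdc : Continuous d)
    (ha0 : a 0 = a₀) (hb0 : b 0 = b₀) (hc0 : c 0 = c₀) (hd0 : d 0 = d₀)
    (hflex : ∀ t : unitInterval,
      ‖a t - b t‖ = ‖a₀ - b₀‖ ∧ ‖a t - d t‖ = ‖a₀ - d₀‖ ∧
      ‖c t - b t‖ = ‖c₀ - b₀‖ ∧ ‖c t - d t‖ = ‖c₀ - d₀‖)
    (hnc : ∀ δ : ℝ, 0 < δ → δ < 1 →
      NonconstantBefore (fun t => ‖b t - d t‖) δ)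
    (v : unitInterval → E3) (hv : Continuous v) :
    (∃ δ > (0 : ℝ), ∀ t : unitInterval, (t : ℝ) < δ →
        ⟪b t - d t, a t - v t⟫ = 0) ∨
    (∀ δ : ℝ, 0 < δ → NonconstantBefore (fun t => ‖v t - b t‖) δ) ∨
    (∀ δ : ℝ, 0 < δ → NonconstantBefore (fun t => ‖v t - d t‖) δ) := by
  by_cases hB : ∀ δ : ℝ, 0 < δ → NonconstantBefore (fun t => ‖v t - b t‖) δ
  · exact Or.inr (Or.inl hB)
  by_cases hD : ∀ δ : ℝ, 0 < δ → NonconstantBefore (fun t => ‖v t - d t‖) δ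
  · exact Or.inr (Or.inr hD)
  left
  push_neg at hB hD
  obtain ⟨δ₁, hδ₁, hB⟩ := hB
  obtain ⟨δ₂, hδ₂, hD⟩ := hD
  unfold NonconstantBefore at hB hD
  push_neg at hB hD
  refine ⟨min δ₁ δ₂, lt_min hδ₁ hδ₂, fun t ht => ?_⟩
  have h0₁ : ((0 : unitInterval) : ℝ) < δ₁ := by simpa using hδ₁
  have h0₂ : ((0 : unitInterval) : ℝ) < δ₂ := by simpa using hδ₂
  have ht₁ : (t : ℝ) < δ₁ := lt_of_lt_of_le ht (min_le_left _ _)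
  have ht₂ : (t : ℝ) < δ₂ := lt_of_lt_of_le ht (min_le_right _ _)
  have hvb : ‖v t - b t‖ = ‖v 0 - b 0‖ := hB t 0 ht₁ h0₁
  have hvd : ‖v t - d t‖ = ‖v 0 - d 0‖ := hD t 0 ht₂ h0₂
  have hvbd : ‖v t - b t‖ = ‖v t - d t‖ := by
    rw [hvb, hvd, hb0, hd0, hbd]
  have habt : ‖a t - b t‖ = ‖a t - d t‖ := by
    rw [(hflex t).1, (hflex t).2.1, hab]
  have h1 := inner_eq_of_norm_sub_eq (a t) (b t) (d t) habt
  have h2 := inner_eq_of_norm_sub_eq (v t) (b t) (d t) hvbd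
  rw [inner_sub_right, h1, h2, sub_self]
end
end
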